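/- arXiv:0907.0624 — 4 statements merged into one kernel-verified Lean document; each statement's English description precedes it below -/
import Mathlib

section
/- Let p, q ≥ 2 be multiplicatively independent integers and let m, n, a, b, c, d be positive integers with n < m. Then there exist integers k, ℓ ≥ 1 such that n·q^(c+dℓ) ≤ m·p^(a+bk) and (m+1)·p^(a+bk) ≤ (n+1)·q^(c+dℓ). -/
/-!
Taking logarithms, the two inequalities say that `k θ - ℓ`, with `θ = log (p^b) / log (q^d)`,
lies in a fixed interval of positive length, the length being positive because
`n / m < (n + 1) / (m + 1)`. Multiplicative independence makes `θ` irrational, so by Kronecker's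
theorem the positive multiples of `θ` are dense modulo `1` and hit that interval for arbitrarily
large `k`, which forces `ℓ ≥ 1` as well.
-/

open Real Set Filter

theorem frequently_exists_int_mul_sub_mem_Ioo {θ : ℝ} (hθ : Irrational θ) {α β : ℝ}
    (hαβ : α < β) : ∃ᶠ k : ℕ in atTop, ∃ ℓ : ℤ, k * θ - ℓ ∈ Ioo α β := by
  set U : Set (AddCircle (1 : ℝ)) := (↑) '' Ioo α β
  have hU : IsOpen U := QuotientAddGroup.isOpenMap_coe _ isOpen_Ioo
  have hdense : DenseRange (· • (θ : AddCircle (1 : ℝ)) : ℤ → AddCircle (1 : ℝ)) :=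
    AddCircle.denseRange_zsmul_coe_iff.mpr (by simpa using hθ)
  obtain ⟨j, hj⟩ := hdense.exists_mem_open hU ((nonempty_Ioo.mpr hαβ).image _)
  -- in the compact group `ℝ/ℤ`, every integer multiple is a cluster point of the positive ones
  refine ((mapClusterPt_self_zsmul_atTop_nsmul _ j).frequently (hU.mem_nhds hj)).mono ?_
  rintro k ⟨t, ht, hkt⟩
  obtain ⟨ℓ, hℓ⟩ := (AddCircle.coe_eq_zero_iff 1).mp
    (show ((k * θ - t : ℝ) : AddCircle (1 : ℝ)) = 0 by
      rw [AddCircle.coe_sub, ← nsmul_eq_mul, AddCircle.coe_nsmul, hkt, sub_self])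
  rw [zsmul_one] at hℓ
  exact ⟨ℓ, by simpa [hℓ] using ht⟩

theorem exists_nat_mul_sub_nat_mem_Ioo {θ : ℝ} (hθ : Irrational θ) (hθ_pos : 0 < θ) {α β : ℝ}
    (hαβ : α < β) : ∃ k ℓ : ℕ, 1 ≤ k ∧ 1 ≤ ℓ ∧ k * θ - ℓ ∈ Ioo α β := by
  obtain ⟨K, hK⟩ := exists_nat_gt (β / θ)
  obtain ⟨k, ⟨ℓ, hℓ⟩, hKk, hk⟩ := ((frequently_exists_int_mul_sub_mem_Ioo hθ hαβ).and_eventually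
    ((eventually_ge_atTop K).and (eventually_ge_atTop 1))).exists
  -- `ℓ > kθ - β ≥ Kθ - β > 0`
  have hℓ_pos : (0 : ℝ) < ℓ := by
    have : β < K * θ := by rwa [div_lt_iff₀ hθ_pos] at hK
    have : (K : ℝ) * θ ≤ k * θ := by gcongr
    linarith [hℓ.2]
  lift ℓ to ℕ using by exact_mod_cast hℓ_pos.le
  exact ⟨k, ℓ, hk, by exact_mod_cast hℓ_pos, by exact_mod_cast hℓ⟩

theorem irrational_log_div_log {x y : ℝ} (hx : 1 < x) (hy : 1 < y)
    (hxy : ∀ k ℓ : ℕ, x ^ k = y ^ ℓ → k = 0) : Irrational (log x / log y) := by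
  rintro ⟨r, hr⟩
  have hr_pos : 0 < r := by
    have : (0 : ℝ) < r := hr ▸ div_pos (log_pos hx) (log_pos hy)
    exact_mod_cast this
  obtain ⟨N, hN⟩ := Int.eq_ofNat_of_zero_le (Rat.num_nonneg.mpr hr_pos.le)
  refine r.den_nz (hxy r.den N ?_)
  have hlog : r.den * log x = N * log y := by
    have hden : (r.den : ℝ) ≠ 0 := by exact_mod_cast r.den_nz
    rw [Rat.cast_def, hN, eq_div_iff (log_pos hy).ne', div_mul_eq_mul_div, div_eq_iff hden] at hr
    push_cast at hr
    linarith
  have := congrArg exp hlog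
  rwa [← log_pow, ← log_pow, exp_log (by positivity), exp_log (by positivity)] at this

theorem exists_pow_div_pow_mem_Ioo {x y : ℝ} (hx : 1 < x) (hy : 1 < y)
    (hxy : Irrational (log x / log y)) {u v : ℝ} (hu : 0 < u) (huv : u < v) :
    ∃ k ℓ : ℕ, 1 ≤ k ∧ 1 ≤ ℓ ∧ x ^ k / y ^ ℓ ∈ Ioo u v := by
  have hlx := log_pos hx
  have hly := log_pos hy
  obtain ⟨k, ℓ, hk, hℓ, h⟩ := exists_nat_mul_sub_nat_mem_Ioo hxy (div_pos hlx hly)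
    (div_lt_div_of_pos_right (log_lt_log hu huv) hly)
  have hlog : log (x ^ k / y ^ ℓ) = (k * (log x / log y) - ℓ) * log y := by
    rw [log_div (by positivity) (by positivity), log_pow, log_pow]
    field_simp
  refine ⟨k, ℓ, hk, hℓ, ?_, ?_⟩
  · rw [← log_lt_log_iff hu (by positivity), hlog, ← div_lt_iff₀ hly]; exact h.1
  · rw [← log_lt_log_iff (by positivity) (by linarith), hlog, ← lt_div_iff₀ hly]; exact h.2

theorem stmt_1_general (p q m n a b c d : ℕ) (hp : 2 ≤ p) (hq : 2 ≤ q)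
    (hindep : ∀ k ℓ : ℕ, p ^ k = q ^ ℓ → k = 0 ∧ ℓ = 0)
    (hn : 1 ≤ n) (hb : 1 ≤ b) (hd : 1 ≤ d)
    (hnm : n < m) :
    ∃ k ℓ : ℕ, 1 ≤ k ∧ 1 ≤ ℓ ∧
      n * q ^ (c + d * ℓ) ≤ m * p ^ (a + b * k) ∧
      (m + 1) * p ^ (a + b * k) ≤ (n + 1) * q ^ (c + d * ℓ) := by
  have hp1 : (1 : ℝ) < p := by exact_mod_cast hp
  have hq1 : (1 : ℝ) < q := by exact_mod_cast hq
  have hirr : Irrational (log ((p : ℝ) ^ b) / log ((q : ℝ) ^ d)) := by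
    refine irrational_log_div_log (one_lt_pow₀ hp1 (by omega)) (one_lt_pow₀ hq1 (by omega))
      fun k ℓ h ↦ ?_
    rw [← pow_mul, ← pow_mul] at h
    exact (Nat.mul_eq_zero.mp (hindep (b * k) (d * ℓ) (by exact_mod_cast h)).1).resolve_left
      (by omega)
  have hm : 0 < m := by omega
  have hnm' : (n : ℝ) < m := by exact_mod_cast hnm
  obtain ⟨k, ℓ, hk, hℓ, hlo, hhi⟩ := exists_pow_div_pow_mem_Ioo (one_lt_pow₀ hp1 (by omega))
    (one_lt_pow₀ hq1 (by omega)) hirr (u := n * q ^ c / (m * p ^ a))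
    (v := (n + 1) * q ^ c / ((m + 1) * p ^ a)) (by positivity)
    (by
      rw [div_lt_div_iff₀ (by positivity) (by positivity)]
      linarith [mul_lt_mul_of_pos_left hnm' (by positivity : (0 : ℝ) < q ^ c * p ^ a)])
  rw [div_lt_div_iff₀ (by positivity) (by positivity)] at hlo hhi
  refine ⟨k, ℓ, hk, hℓ, ?_, ?_⟩
  · have : (n : ℝ) * q ^ (c + d * ℓ) ≤ m * p ^ (a + b * k) := by
      rw [pow_add, pow_add, pow_mul, pow_mul]; linarith
    exact_mod_cast this
  · have : ((m : ℝ) + 1) * p ^ (a + b * k) ≤ (n + 1) * q ^ (c + d * ℓ) := by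
      rw [pow_add, pow_add, pow_mul, pow_mul]; linarith
    exact_mod_cast this

theorem stmt_1 (p q m n a b c d : ℕ) (hp : 2 ≤ p) (hq : 2 ≤ q)
    (hindep : ∀ k ℓ : ℕ, p ^ k = q ^ ℓ → k = 0 ∧ ℓ = 0)
    (hm : 1 ≤ m) (hn : 1 ≤ n) (ha : 1 ≤ a) (hb : 1 ≤ b) (hc : 1 ≤ c) (hd : 1 ≤ d)
    (hnm : n < m) :
    ∃ k ℓ : ℕ, 1 ≤ k ∧ 1 ≤ ℓ ∧
      n * q ^ (c + d * ℓ) ≤ m * p ^ (a + b * k) ∧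
      (m + 1) * p ^ (a + b * k) ≤ (n + 1) * q ^ (c + d * ℓ) :=
  stmt_1_general p q m n a b c d hp hq hindep hn hb hd hnm
end

section
/- There exists a 2-recognizable infinite set X ⊆ ℕ such that the language 0*ρ₂(X) is right dense (for every word u over {0,1} there is a word v with uv ∈ 0*ρ₂(X)) but X is not syndetic. -/
/-!
Take `X` to be the set of numbers with an odd number of binary digits, i.e. `⋃ i, [4 ^ i, 2 * 4 ^ i)`.
Its binary representations are the words with no leading zero and odd length, an intersection of
two languages recognized by tiny automata. A word `0 ^ z w` with `w` free of leading zeroes becomes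
such a representation after appending at most one digit, while `X` misses every interval
`[2 ^ (2k+1), 2 ^ (2k+2))`, so its gaps are unbounded.
-/

def pRep (p : ℕ) (hp : 0 < p) (n : ℕ) : List (Fin p) :=
  (Nat.digits p n).reverse.map (fun d => ⟨d % p, Nat.mod_lt d hp⟩)

namespace Language

variable {α : Type*}

theorem isRegular_odd_length : IsRegular {w : List α | Odd w.length} := by
  let M : DFA α (ZMod 2) := ⟨fun s _ => s + 1, 0, {1}⟩
  have hM : ∀ s w, M.evalFrom s w = s + w.length := by
    intro s w
    induction w generalizing s with
    | nil => simp [M]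
    | cons a w ih => simp only [DFA.evalFrom_cons, ih, List.length_cons]; push_cast; ring
  refine ⟨ZMod 2, inferInstance, M, ?_⟩
  ext w
  change M.eval w ∈ ({1} : Set (ZMod 2)) ↔ Odd w.length
  simp [DFA.eval, hM, M, ZMod.natCast_eq_one_iff_odd]

theorem isRegular_forall_mem_head? (p : α → Prop) [DecidablePred p] :
    IsRegular {w : List α | ∀ a ∈ w.head?, p a} := by
  -- `none` is the initial state; after the first letter `a` the state is frozen at `some (p a)`
  let M : DFA α (Option Bool) := ⟨fun s a => s.elim (some (decide (p a))) some, none, {some false}ᶜ⟩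
  have hM : ∀ b w, M.evalFrom (some b) w = some b := by
    intro b w
    induction w with
    | nil => rfl
    | cons a w ih => exact ih
  refine ⟨Option Bool, inferInstance, M, ?_⟩
  ext w
  change M.eval w ∈ ({some false}ᶜ : Set (Option Bool)) ↔ ∀ a ∈ w.head?, p a
  cases w <;> simp [DFA.eval, hM, M]

end Language

namespace List

variable {α : Type*}

theorem exists_eq_replicate_append (a : α) (u : List α) :
    ∃ z w, u = replicate z a ++ w ∧ ∀ b ∈ w.head?, b ≠ a := by
  induction u with
  | nil => exact ⟨0, [], rfl, by simp⟩
  | cons b u ih =>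
    by_cases hb : b = a
    · obtain ⟨z, w, rfl, hw⟩ := ih
      exact ⟨z + 1, w, by simp [hb, replicate_succ], hw⟩
    · exact ⟨0, b :: u, rfl, by simpa using hb⟩

end List

theorem Nat.length_digits_eq_add_one_iff {b k : ℕ} (hb : 1 < b) (n : ℕ) :
    (b.digits n).length = k + 1 ↔ b ^ k ≤ n ∧ n < b ^ (k + 1) := by
  rw [← Nat.lt_digits_length_iff hb, ← Nat.digits_length_le_iff hb]
  omega

section pRep

variable {p : ℕ}

theorem length_pRep (hp : 0 < p) (n : ℕ) : (pRep p hp n).length = (Nat.digits p n).length := by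
  simp [pRep]

theorem map_val_pRep (hp : 1 < p) (n : ℕ) :
    (pRep p (zero_lt_one.trans hp) n).map Fin.val = (Nat.digits p n).reverse := by
  rw [pRep, List.map_map]
  refine (List.map_congr_left fun d hd => ?_).trans (List.map_id _)
  exact Nat.mod_eq_of_lt (Nat.digits_lt_base hp (List.mem_reverse.mp hd))

theorem range_pRep [NeZero p] (hp : 1 < p) :
    Set.range (pRep p (zero_lt_one.trans hp)) = {w | ∀ a ∈ w.head?, a ≠ 0} := by
  ext w
  constructor
  · rintro ⟨n, rfl⟩ a ha
    have hlast : a.val ∈ (Nat.digits p n).getLast? := by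
      rw [← List.head?_reverse, ← map_val_pRep hp, List.head?_map]
      exact Option.mem_map_of_mem _ ha
    obtain ⟨hne, ha⟩ := List.mem_getLast?_eq_getLast hlast
    have hn : n ≠ 0 := by rintro rfl; simp at hne
    exact fun h => Nat.getLast_digit_ne_zero p hn (ha ▸ Fin.val_eq_zero_iff.mpr h)
  · intro hw
    refine ⟨Nat.ofDigits p (w.map Fin.val).reverse, List.map_injective_iff.mpr Fin.val_injective ?_⟩
    rw [map_val_pRep hp, Nat.digits_ofDigits p hp, List.reverse_reverse]
    · simp
    · intro h
      rw [List.getLast_reverse, List.head_map]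
      exact fun h0 => hw _ (List.head_mem_head? _) (Fin.val_eq_zero_iff.mp h0)

end pRep

def oddBitLength : Set ℕ := {n | Odd (Nat.digits 2 n).length}

theorem two_pow_mem_oddBitLength (i : ℕ) : 2 ^ (2 * i) ∈ oddBitLength := by
  have : (Nat.digits 2 (2 ^ (2 * i))).length = 2 * i + 1 :=
    (Nat.length_digits_eq_add_one_iff one_lt_two _).mpr ⟨le_rfl, Nat.pow_lt_pow_succ one_lt_two⟩
  change Odd _
  rw [this]
  exact odd_two_mul_add_one i

theorem not_mem_oddBitLength {k n : ℕ} (h₁ : 2 ^ (2 * k + 1) ≤ n) (h₂ : n < 2 ^ (2 * k + 2)) :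
    n ∉ oddBitLength := by
  have : (Nat.digits 2 n).length = 2 * k + 1 + 1 :=
    (Nat.length_digits_eq_add_one_iff one_lt_two _).mpr ⟨h₁, h₂⟩
  simp [oddBitLength, this, Nat.odd_add_one, parity_simps]

theorem oddBitLength_infinite : oddBitLength.Infinite :=
  Set.infinite_of_forall_exists_gt fun a =>
    ⟨_, two_pow_mem_oddBitLength a,
      Nat.lt_two_pow_self.trans_le (Nat.pow_le_pow_right two_pos (by omega))⟩

theorem oddBitLength_not_syndetic :
    ¬ ∃ C : ℕ, 0 < C ∧ ∀ n : ℕ, ∃ x ∈ oddBitLength, n ≤ x ∧ x < n + C := by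
  rintro ⟨C, -, hC⟩
  obtain ⟨x, hx, hlo, hhi⟩ := hC (2 ^ (2 * C + 1))
  have hC : C < 2 ^ (2 * C + 1) :=
    Nat.lt_two_pow_self.trans_le (Nat.pow_le_pow_right two_pos (by omega))
  exact not_mem_oddBitLength hlo (by rw [pow_succ]; omega) hx

theorem pRep_image_oddBitLength :
    {w | ∃ n ∈ oddBitLength, w = pRep 2 two_pos n} =
      Set.range (pRep 2 two_pos) ∩ {w | Odd w.length} := by
  ext w
  constructor
  · rintro ⟨n, hn, rfl⟩
    exact ⟨⟨n, rfl⟩, show Odd _ by rwa [length_pRep]⟩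
  · rintro ⟨⟨n, rfl⟩, hw⟩
    exact ⟨n, show Odd _ from length_pRep two_pos n ▸ hw, rfl⟩

theorem exists_odd_length_append {w : List (Fin 2)} (hw : ∀ a ∈ w.head?, a ≠ 0) :
    ∃ v, (∀ a ∈ (w ++ v).head?, a ≠ 0) ∧ Odd (w ++ v).length := by
  by_cases hodd : Odd w.length
  · exact ⟨[], by simpa using hw, by simpa using hodd⟩
  · refine ⟨[1], ?_, by simpa [Nat.odd_add_one] using hodd⟩
    cases w <;> simp_all

theorem exists_append_eq_replicate_append_pRep (u : List (Fin 2)) :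
    ∃ v, ∃ n ∈ oddBitLength, ∃ z, u ++ v = List.replicate z 0 ++ pRep 2 two_pos n := by
  obtain ⟨z, w, rfl, hw⟩ := u.exists_eq_replicate_append 0
  obtain ⟨v, hv, hodd⟩ := exists_odd_length_append hw
  obtain ⟨n, hn⟩ : w ++ v ∈ Set.range (pRep 2 two_pos) := by
    rw [range_pRep one_lt_two]
    exact hv
  exact ⟨v, n, show Odd _ by rwa [← length_pRep two_pos, hn], z, by simp [hn]⟩

theorem stmt_8 :
    ∃ X : Set ℕ, X.Infinite ∧
      (∃ (σ : Type) (_ : Fintype σ) (A : DFA (Fin 2) σ),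
        A.accepts = {w : List (Fin 2) | ∃ n ∈ X, w = pRep 2 (by norm_num) n}) ∧
      (∀ u : List (Fin 2), ∃ v : List (Fin 2), ∃ n ∈ X, ∃ z : ℕ,
        u ++ v = List.replicate z (0 : Fin 2) ++ pRep 2 (by norm_num) n) ∧
      ¬ ∃ C : ℕ, 0 < C ∧ ∀ n : ℕ, ∃ x ∈ X, n ≤ x ∧ x < n + C := by
  refine ⟨oddBitLength, oddBitLength_infinite, ?_, exists_append_eq_replicate_append_pRep,
    oddBitLength_not_syndetic⟩
  rw [pRep_image_oddBitLength, range_pRep one_lt_two]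
  exact (Language.isRegular_forall_mem_head? _).inf Language.isRegular_odd_length
end

section
/- Let p ≥ 2 and let X ⊆ ℕ be an infinite set recognized by a DFA A reading p-ary representations (most significant digit first). Then for every bound M there exist integers m ≥ M and a, b ≥ 1 such that for all k ∈ ℕ, the interval [m·p^(a+bk), (m+1)·p^(a+bk)) contains an element of X. -/
theorem DFA.exists_pump_suffix {α σ : Type*} [Fintype σ] (A : DFA α σ) {u v : List α}
    (h : u ++ v ∈ A.accepts) (hv : Fintype.card σ ≤ v.length) :
    ∃ b ≥ 1, ∀ k : ℕ, ∃ r : List α, r.length = v.length + b * k ∧ u ++ r ∈ A.accepts := by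
  let B : DFA α σ := { A with start := A.evalFrom A.start u }
  have hB : ∀ r, r ∈ B.accepts ↔ u ++ r ∈ A.accepts := fun r => by
    rw [DFA.mem_accepts, DFA.mem_accepts, DFA.eval, DFA.eval, DFA.evalFrom_of_append]; rfl
  obtain ⟨x, y, z, rfl, -, hy, hpump⟩ := B.pumping_lemma ((hB v).2 h) hv
  refine ⟨y.length, List.length_pos_iff.2 hy, fun k =>
    ⟨x ++ (List.replicate (k + 1) y).flatten ++ z, ?_, (hB _).1 (hpump ?_)⟩⟩
  · simp only [List.append_assoc, List.length_append, List.length_flatten, List.map_replicate,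
      List.sum_replicate, smul_eq_mul]
    ring
  · have hys : (List.replicate (k + 1) y).flatten ∈ KStar.kstar ({y} : Language α) :=
      Language.join_mem_kstar fun w hw => List.eq_of_mem_replicate hw
    exact Language.mem_mul.2 ⟨_, Language.mem_mul.2 ⟨x, rfl, _, hys, rfl⟩, z, rfl, rfl⟩

def wordVal (p : ℕ) (w : List (Fin p)) : ℕ := Nat.ofDigits p (w.reverse.map Fin.val)

section wordVal

variable {p : ℕ}

theorem wordVal_append (u v : List (Fin p)) :
    wordVal p (u ++ v) = wordVal p u * p ^ v.length + wordVal p v := by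
  simp only [wordVal, List.reverse_append, List.map_append, Nat.ofDigits_append,
    List.length_map, List.length_reverse]
  ring

theorem wordVal_cons (d : Fin p) (w : List (Fin p)) :
    wordVal p (d :: w) = d * p ^ w.length + wordVal p w := by
  rw [← List.singleton_append, wordVal_append]
  simp [wordVal]

theorem wordVal_lt_pow_length (w : List (Fin p)) : wordVal p w < p ^ w.length := by
  induction w with
  | nil => simp [wordVal]
  | cons d w ih =>
    rw [wordVal_cons, List.length_cons, pow_succ']
    nlinarith [d.is_lt]

theorem wordVal_pRep (hp : 1 < p) (n : ℕ) : wordVal p (pRep p (by omega) n) = n := by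
  simp only [wordVal, pRep, List.map_reverse, List.reverse_reverse, List.map_map]
  rw [List.map_congr_left (g := id) fun d hd => ?_, List.map_id, Nat.ofDigits_digits]
  exact Nat.mod_eq_of_lt (Nat.digits_lt_base hp hd)

theorem lt_length_pRep_of_pow_le (hp : 1 < p) {n t : ℕ} (h : p ^ t ≤ n) :
    t < (pRep p (by omega) n).length := by
  have := wordVal_lt_pow_length (pRep p (by omega) n)
  rw [wordVal_pRep hp] at this
  exact (Nat.pow_lt_pow_iff_right (by omega)).1 (h.trans_lt this)

theorem mem_Ico_of_pRep_eq_append (hp : 1 < p) {x : ℕ} {u r : List (Fin p)}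
    (h : pRep p (by omega) x = u ++ r) :
    x ∈ Set.Ico (wordVal p u * p ^ r.length) ((wordVal p u + 1) * p ^ r.length) := by
  have hx : x = wordVal p u * p ^ r.length + wordVal p r := by
    rw [← wordVal_pRep hp x, h, wordVal_append]
  have := wordVal_lt_pow_length r
  constructor <;> nlinarith

end wordVal

theorem stmt_9 (p : ℕ) (hp : 2 ≤ p) (X : Set ℕ) (hX : X.Infinite)
    (hrec : ∃ (σ : Type) (_ : Fintype σ) (A : DFA (Fin p) σ),
      A.accepts = {w : List (Fin p) | ∃ n ∈ X, w = pRep p (by omega) n}) :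
    ∀ M : ℕ, ∃ m ≥ M, ∃ a b : ℕ, 1 ≤ a ∧ 1 ≤ b ∧ ∀ k : ℕ,
      ∃ x ∈ X, m * p ^ (a + b * k) ≤ x ∧ x < (m + 1) * p ^ (a + b * k) := by
  obtain ⟨σ, _, A, hA⟩ := hrec
  intro M
  set C := Fintype.card σ
  have hC : 1 ≤ C := Fintype.card_pos_iff.2 ⟨A.start⟩
  obtain ⟨n, hnX, hn⟩ := hX.exists_gt ((M + 1) * p ^ C)
  have hlen : C < (pRep p (by omega) n).length :=
    lt_length_pRep_of_pow_le (by omega) ((Nat.le_mul_of_pos_left _ M.succ_pos).trans hn.le)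
  obtain ⟨u, v, huv, hv⟩ : ∃ u v, pRep p (by omega) n = u ++ v ∧ v.length = C :=
    ⟨_, _, (List.take_append_drop ((pRep p (by omega) n).length - C) _).symm, by simp; omega⟩
  have hM : M + 1 < wordVal p u + 1 := by
    have := (mem_Ico_of_pRep_eq_append (by omega) huv).2
    rw [hv] at this
    exact Nat.lt_of_mul_lt_mul_right (hn.trans this)
  obtain ⟨b, hb, hpump⟩ := A.exists_pump_suffix (by rw [hA, ← huv]; exact ⟨n, hnX, rfl⟩) hv.ge
  refine ⟨wordVal p u, by omega, C, b, hC, hb, fun k => ?_⟩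
  obtain ⟨r, hr, hur⟩ := hpump k
  rw [hA] at hur
  obtain ⟨x, hxX, hx⟩ := hur
  rw [← hv, ← hr]
  exact ⟨x, hxX, mem_Ico_of_pRep_eq_append (by omega) hx.symm⟩
end

section
/- Let p, q ≥ 2 be multiplicatively independent integers. If an infinite set X ⊆ ℕ is both p-recognizable and q-recognizable, then X is syndetic. -/
open Set

def Syndetic (X : Set ℕ) : Prop := ∃ C : ℕ, 0 < C ∧ ∀ n : ℕ, ∃ x ∈ X, n ≤ x ∧ x < n + C

section Digits

variable {p : ℕ}

def wordValue (p : ℕ) (w : List (Fin p)) : ℕ := Nat.ofDigits p (w.reverse.map Fin.val)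

lemma wordValue_append (u v : List (Fin p)) :
    wordValue p (u ++ v) = wordValue p u * p ^ v.length + wordValue p v := by
  simp only [wordValue, List.reverse_append, List.map_append, Nat.ofDigits_append,
    List.length_reverse, List.length_map]
  ring

lemma wordValue_lt (hp : 1 < p) (w : List (Fin p)) : wordValue p w < p ^ w.length := by
  simpa [wordValue] using
    Nat.ofDigits_lt_base_pow_length hp (l := w.reverse.map Fin.val) (by simp)

lemma wordValue_pRep (hp : 1 < p) (n : ℕ) : wordValue p (pRep p (by omega) n) = n := by
  have hmod : (Nat.digits p n).map (· % p) = Nat.digits p n :=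
    (List.map_congr_left fun d hd => Nat.mod_eq_of_lt (Nat.digits_lt_base hp hd)).trans
      (List.map_id _)
  simp [wordValue, pRep, List.map_reverse, Function.comp_def, hmod, Nat.ofDigits_digits]

lemma pRep_eq_pRep_div_append (hp : 1 < p) {n : ℕ} (hn : 0 < n) :
    pRep p (by omega) n = pRep p (by omega) (n / p) ++ [⟨n % p, Nat.mod_lt n (by omega)⟩] := by
  simp [pRep, Nat.digits_def' hp hn]

lemma exists_pRep_eq_append_iff (hp : 1 < p) {a : ℕ} (ha : 0 < a) {k y : ℕ} :
    (∃ w : List (Fin p), w.length = k ∧ pRep p (by omega) y = pRep p (by omega) a ++ w) ↔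
      y ∈ Ico (a * p ^ k) ((a + 1) * p ^ k) := by
  constructor
  · rintro ⟨w, rfl, hw⟩
    have hy : y = a * p ^ w.length + wordValue p w := by
      rw [← wordValue_pRep hp y, hw, wordValue_append, wordValue_pRep hp]
    have := wordValue_lt hp w
    rw [mem_Ico, add_one_mul]
    omega
  · induction k generalizing y with
    | zero =>
      intro hy
      obtain rfl : y = a := by simp only [pow_zero, mul_one, mem_Ico] at hy; omega
      exact ⟨[], rfl, by simp⟩
    | succ k ih =>
      rintro ⟨hlo, hhi⟩
      have hp0 : 0 < p := by omega
      have hy : 0 < y := lt_of_lt_of_le (by positivity) hlo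
      obtain ⟨w, hw, hyw⟩ := ih (y := y / p)
        ⟨(Nat.le_div_iff_mul_le hp0).2 (by rwa [mul_assoc, ← pow_succ]),
          (Nat.div_lt_iff_lt_mul hp0).2 (by rwa [mul_assoc, ← pow_succ])⟩
      exact ⟨w ++ [_], by simp [hw], by rw [pRep_eq_pRep_div_append hp hy, hyw, List.append_assoc]⟩

end Digits

namespace DFA

variable {α σ : Type*} (M : DFA α σ)

def reachIn (s : σ) (k : ℕ) : Set σ := {t | ∃ w : List α, w.length = k ∧ M.evalFrom s w = t}

lemma reachIn_add (s : σ) (j k : ℕ) :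
    M.reachIn s (j + k) = ⋃ t ∈ M.reachIn s j, M.reachIn t k := by
  ext r
  simp only [reachIn, mem_iUnion, mem_ofPred_eq, exists_prop]
  constructor
  · rintro ⟨w, hw, rfl⟩
    refine ⟨_, ⟨w.take j, by simp only [List.length_take]; omega, rfl⟩, w.drop j,
      by simp only [List.length_drop]; omega, ?_⟩
    rw [← evalFrom_of_append, List.take_append_drop]
  · rintro ⟨_, ⟨u, hu, rfl⟩, v, hv, rfl⟩
    exact ⟨u ++ v, by simp [hu, hv], M.evalFrom_of_append s u v⟩

lemma reachIn_add_mul {s : σ} {k b : ℕ} (h : M.reachIn s (k + b) = M.reachIn s k) (n : ℕ) :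
    M.reachIn s (k + n * b) = M.reachIn s k := by
  induction n with
  | zero => simp
  | succ n ih =>
    rw [show k + (n + 1) * b = k + b + n * b by ring, reachIn_add, h, ← reachIn_add, ih]

theorem exists_add_mul_not_mem_accepts [Finite σ] (u : ℕ → List α)
    (h : ∀ k w, w.length = k → u k ++ w ∉ M.accepts) :
    ∃ k b, 0 < b ∧ ∀ n w, w.length = k + n * b → u k ++ w ∉ M.accepts := by
  -- infinitely many `u k` lead to one state `t`, and along them the sets `reachIn t k` repeat
  obtain ⟨t, ht⟩ := Finite.exists_infinite_fiber fun k => M.eval (u k)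
  obtain ⟨k, hk, l, -, hkl, hreach⟩ := (Set.infinite_coe_iff.1 ht).exists_lt_map_eq_of_mapsTo
    (f := M.reachIn t) (mapsTo_univ _ _) finite_univ
  have hk : M.eval (u k) = t := hk
  refine ⟨k, l - k, by omega, fun n w hw hacc => ?_⟩
  have hperiodic := M.reachIn_add_mul (by rw [Nat.add_sub_cancel' hkl.le]; exact hreach.symm) n
  obtain ⟨w', hw', heq⟩ : M.evalFrom t w ∈ M.reachIn t k := hperiodic ▸ ⟨w, hw, rfl⟩
  refine h k w' hw' ?_
  rw [mem_accepts, eval, evalFrom_of_append] at hacc ⊢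
  rwa [← eval, hk, heq, ← hk]

end DFA

lemma exists_nat_mul_sub_mem_Ioo_of_pos {α β t₁ t₂ : ℝ} (hβ : 0 < β) {i₀ n₀ : ℕ}
    (hg : (i₀ : ℝ) * α - n₀ * β ∈ Ioo 0 (t₂ - t₁)) :
    ∃ i n : ℕ, (i : ℝ) * α - n * β ∈ Ioo t₁ t₂ := by
  obtain ⟨hg0, hgt⟩ := hg
  obtain ⟨M, hM⟩ := exists_nat_gt (-t₁ / β)
  have hM' : 0 < t₁ + M * β := by rw [div_lt_iff₀ hβ] at hM; linarith
  -- the first multiple of `g = i₀ α - n₀ β` beyond `t₁ + M β` overshoots by at most `g`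
  set k := ⌊(t₁ + M * β) / (i₀ * α - n₀ * β)⌋₊ + 1 with hk
  have hlo : t₁ + M * β < k * (i₀ * α - n₀ * β) := by
    have := Nat.lt_floor_add_one ((t₁ + M * β) / (i₀ * α - n₀ * β))
    rw [div_lt_iff₀ hg0] at this
    push_cast [hk]
    linarith
  have hhi : k * (i₀ * α - n₀ * β) ≤ t₁ + M * β + (i₀ * α - n₀ * β) := by
    have := Nat.floor_le (div_pos hM' hg0).le
    rw [le_div_iff₀ hg0] at this
    push_cast [hk]
    linarith
  refine ⟨k * i₀, k * n₀ + M, ?_, ?_⟩ <;> push_cast <;> linarith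

lemma exists_nat_mul_sub_mem_Ioo {α β : ℝ} (hα : 0 < α) (hβ : 0 < β)
    (hαβ : ∀ i n : ℕ, (i : ℝ) * α = n * β → i = 0) {t₁ t₂ : ℝ} (ht : t₁ < t₂) :
    ∃ i n : ℕ, (i : ℝ) * α - n * β ∈ Ioo t₁ t₂ := by
  -- Dirichlet approximation of `α / β` makes `k α - j β` nonzero and shorter than `t₂ - t₁`;
  -- if it is negative, exchange the roles of `α` and `β`
  obtain ⟨N, hN⟩ := exists_nat_gt (β / (t₂ - t₁))
  have hN0 : 0 < N := by exact_mod_cast (div_pos hβ (sub_pos.2 ht)).trans hN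
  obtain ⟨j, k, hk, -, hjk⟩ := Real.exists_int_int_abs_mul_sub_le (α / β) hN0
  have hN1 : (1 : ℝ) / (N + 1) < 1 := by
    rw [div_lt_one (by positivity)]
    exact_mod_cast Nat.lt_add_of_pos_left hN0
  have hj : 0 ≤ j := by
    by_contra! hj
    have : (j : ℝ) ≤ -1 := by exact_mod_cast Int.le_sub_one_of_lt hj
    have : (0 : ℝ) < k := by exact_mod_cast hk
    have : 0 < (k : ℝ) * (α / β) := by positivity
    linarith [le_abs_self ((k : ℝ) * (α / β) - j)]
  have hsmall : |k * α - j * β| < t₂ - t₁ :=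
    calc |k * α - j * β| = β * |k * (α / β) - j| := by
          rw [← abs_of_pos hβ, ← abs_mul, abs_of_pos hβ]; congr 1; field_simp
      _ ≤ β * (1 / (N + 1)) := by gcongr
      _ < t₂ - t₁ := by
          rw [div_lt_iff₀ (sub_pos.2 ht)] at hN
          rw [mul_one_div, div_lt_iff₀ (by positivity)]
          nlinarith
  lift k to ℕ using hk.le
  lift j to ℕ using hj
  push_cast at hsmall
  have hne : (k : ℝ) * α - j * β ≠ 0 := fun h =>
    (Nat.cast_pos.1 hk).ne' (hαβ k j (by linarith))
  rw [abs_lt] at hsmall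
  rcases hne.lt_or_gt with hneg | hpos
  · obtain ⟨i, n, hin⟩ := exists_nat_mul_sub_mem_Ioo_of_pos (α := β) (β := α) (t₁ := -t₂)
      (t₂ := -t₁) hα (i₀ := j) (n₀ := k) ⟨by linarith, by linarith⟩
    exact ⟨n, i, by linarith [hin.2], by linarith [hin.1]⟩
  · exact exists_nat_mul_sub_mem_Ioo_of_pos hβ ⟨hpos, by linarith⟩

lemma exists_mul_pow_mem_Ioo {P Q : ℕ} (hP : 1 < P) (hQ : 1 < Q)
    (hPQ : ∀ k l : ℕ, P ^ k = Q ^ l → k = 0 ∧ l = 0) {c u v : ℝ} (hc : 0 < c) (hu : 0 < u)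
    (huv : u < v) (N : ℕ) :
    ∃ i n : ℕ, N ≤ n ∧ u * P ^ n < c * Q ^ i ∧ c * Q ^ i < v * P ^ n := by
  have hP1 : (1 : ℝ) < P := by exact_mod_cast hP
  have hQ1 : (1 : ℝ) < Q := by exact_mod_cast hQ
  have hP0 : 0 < Real.log P := Real.log_pos hP1
  have hQ0 : 0 < Real.log Q := Real.log_pos hQ1
  have hind : ∀ i n : ℕ, (i : ℝ) * Real.log Q = n * Real.log P → i = 0 := by
    intro i n h
    rw [← Real.log_pow, ← Real.log_pow] at h
    have := Real.log_injOn_pos (mem_Ioi.2 (pow_pos (zero_lt_one.trans hQ1) i))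
      (mem_Ioi.2 (pow_pos (zero_lt_one.trans hP1) n)) h
    exact (hPQ n i (by exact_mod_cast this.symm)).2
  obtain ⟨i, n, hlo, hhi⟩ := exists_nat_mul_sub_mem_Ioo hQ0 hP0 hind
    (t₁ := Real.log u - Real.log c + N * Real.log P)
    (t₂ := Real.log v - Real.log c + N * Real.log P) (by linarith [Real.log_lt_log hu huv])
  have hPn : (0 : ℝ) < P ^ (n + N) := pow_pos (zero_lt_one.trans hP1) _
  have hQi : (0 : ℝ) < Q ^ i := pow_pos (zero_lt_one.trans hQ1) _
  have hlog : ∀ x : ℝ, 0 < x → Real.log (x * P ^ (n + N)) = Real.log x + (n + N) * Real.log P :=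
    fun x hx => by rw [Real.log_mul hx.ne' hPn.ne', Real.log_pow]; push_cast; ring
  refine ⟨i, n + N, by omega, ?_, ?_⟩
  · rw [← Real.log_lt_log_iff (mul_pos hu hPn) (mul_pos hc hQi), hlog u hu,
      Real.log_mul hc.ne' hQi.ne', Real.log_pow]
    linarith
  · rw [← Real.log_lt_log_iff (mul_pos hc hQi) (mul_pos (hu.trans huv) hPn),
      hlog v (hu.trans huv), Real.log_mul hc.ne' hQi.ne', Real.log_pow]
    linarith

lemma exists_mul_pow_add_mem_Ico {P Q : ℕ} (hP : 1 < P) (hQ : 1 < Q)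
    (hPQ : ∀ k l : ℕ, P ^ k = Q ^ l → k = 0 ∧ l = 0) {c : ℝ} (hc : 0 < c) (d : ℝ) {w a : ℝ}
    (hw : 0 < w) (ha : 0 ≤ a) :
    ∃ i n : ℕ, c * Q ^ i + d ∈ Ico (a * (w * P ^ n)) ((a + 1) * (w * P ^ n)) := by
  have hP1 : (1 : ℝ) < P := by exact_mod_cast hP
  obtain ⟨N, hN⟩ := pow_unbounded_of_one_lt (4 * |d| / w) hP1
  -- aim at the middle half of the block, which leaves room for `|d| ≤ w P ^ n / 4`
  obtain ⟨i, n, hn, hlo, hhi⟩ := exists_mul_pow_mem_Ioo hP hQ hPQ hc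
    (u := (a + 1 / 4) * w) (v := (a + 3 / 4) * w) (by positivity) (by nlinarith) N
  have hd : 4 * |d| ≤ w * P ^ n := by
    rw [div_lt_iff₀ hw] at hN
    nlinarith [pow_le_pow_right₀ hP1.le hn]
  refine ⟨i, n, ?_, ?_⟩ <;> nlinarith [neg_abs_le d, le_abs_self d]

lemma eq_mul_pow_sub_of_succ {K : Type*} [Field K] {f : ℕ → K} {r s : K} (hr : r ≠ 1)
    (hf : ∀ i, f (i + 1) = f i * r + s) (i : ℕ) :
    f i = (f 0 + s / (r - 1)) * r ^ i - s / (r - 1) := by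
  have hr' : r - 1 ≠ 0 := sub_ne_zero.2 hr
  induction i with
  | zero => simp
  | succ i ih => rw [hf, ih]; field_simp; ring

lemma exists_Ico_disjoint_of_not_syndetic {X : Set ℕ} (hX : ¬ Syndetic X) {d : ℕ} (hd : 0 < d) :
    ∃ a, 0 < a ∧ ∀ x ∈ X, x ∉ Ico (a * d) ((a + 1) * d) := by
  unfold Syndetic at hX
  push Not at hX
  obtain ⟨n, hn⟩ := hX (2 * d) (by omega)
  refine ⟨n / d + 1, Nat.succ_pos _, fun x hx ⟨hlo, hhi⟩ => ?_⟩
  have h1 := Nat.div_mul_le_self n d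
  have h2 := Nat.lt_div_mul_add (a := n) hd
  simp only [add_mul, one_mul] at hlo hhi
  have := hn x hx (by omega)
  omega

theorem exists_Ico_pow_disjoint_of_not_syndetic {p : ℕ} (hp : 1 < p) {σ : Type*} [Finite σ]
    (A : DFA (Fin p) σ) {X : Set ℕ} (hA : A.accepts = {w | ∃ n ∈ X, w = pRep p (by omega) n})
    (hX : ¬ Syndetic X) :
    ∃ a k b, 0 < b ∧ ∀ n, ∀ y ∈ X, y ∉ Ico (a * p ^ (k + n * b)) ((a + 1) * p ^ (k + n * b)) := by
  choose a ha hgap using fun k =>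
    exists_Ico_disjoint_of_not_syndetic hX (pow_pos (by omega : 0 < p) k)
  have hdead : ∀ k w, w.length = k → pRep p (by omega) (a k) ++ w ∉ A.accepts := by
    rintro k w rfl hw
    rw [hA] at hw
    obtain ⟨x, hx, hxw⟩ := hw
    exact hgap _ x hx ((exists_pRep_eq_append_iff hp (ha _)).1 ⟨w, rfl, hxw.symm⟩)
  obtain ⟨k, b, hb, hper⟩ := A.exists_add_mul_not_mem_accepts _ hdead
  refine ⟨a k, k, b, hb, fun n y hy hyI => ?_⟩
  obtain ⟨w, hw, hyw⟩ := (exists_pRep_eq_append_iff hp (ha k)).2 hyI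
  exact hper n w hw (hyw ▸ hA ▸ ⟨y, hy, rfl⟩)

theorem exists_eq_mul_pow_add_of_infinite {q : ℕ} (hq : 1 < q) {τ : Type*} [Fintype τ]
    (B : DFA (Fin q) τ) {X : Set ℕ} (hB : B.accepts = {w | ∃ n ∈ X, w = pRep q (by omega) n})
    (hX : X.Infinite) :
    ∃ m, 0 < m ∧ ∃ c d : ℝ, 0 < c ∧ ∀ i, ∃ y ∈ X, (y : ℝ) = c * ((q ^ m : ℕ) : ℝ) ^ i + d := by
  obtain ⟨x, hx, hxlt⟩ := hX.exists_gt (q ^ Fintype.card τ)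
  have hlen : Fintype.card τ ≤ (pRep q (by omega) x).length := by
    have := wordValue_lt hq (pRep q (by omega) x)
    rw [wordValue_pRep hq] at this
    exact ((Nat.pow_lt_pow_iff_right hq).1 (hxlt.trans this)).le
  obtain ⟨u, v, w, -, -, hv, hpump⟩ := B.pumping_lemma (hB ▸ ⟨x, hx, rfl⟩) hlen
  have hy : ∀ i, ∃ y ∈ X, pRep q (by omega) y = u ++ (List.replicate i v).flatten ++ w := by
    intro i
    have hmem : (List.replicate i v).flatten ∈ KStar.kstar ({v} : Language (Fin q)) :=
      Language.join_mem_kstar fun y hy => (List.eq_of_mem_replicate hy).symm ▸ rfl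
    have : u ++ (List.replicate i v).flatten ++ w ∈ B.accepts :=
      hpump (Language.mem_mul.2 ⟨_, Language.mem_mul.2 ⟨u, rfl, _, hmem, rfl⟩, w, rfl, rfl⟩)
    rw [hB] at this
    obtain ⟨y, hyX, hyw⟩ := this
    exact ⟨y, hyX, hyw.symm⟩
  choose y hyX hyw using hy
  set Q : ℝ := ((q ^ v.length : ℕ) : ℝ)
  have hQ : 1 < Q := Nat.one_lt_cast.2 (Nat.one_lt_pow (List.length_pos_iff.2 hv).ne' hq)
  set V : ℝ := (wordValue q v : ℝ)
  have hz : ∀ i, (wordValue q (u ++ (List.replicate i v).flatten) : ℝ)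
      = (wordValue q u + V / (Q - 1)) * Q ^ i - V / (Q - 1) := by
    have hrec : ∀ i, (wordValue q (u ++ (List.replicate (i + 1) v).flatten) : ℝ)
        = wordValue q (u ++ (List.replicate i v).flatten) * Q + V := by
      intro i
      rw [List.replicate_succ', List.flatten_append, List.flatten_singleton, ← List.append_assoc,
        wordValue_append]
      push_cast [Q, V]
      ring
    simpa using eq_mul_pow_sub_of_succ
      (f := fun i => (wordValue q (u ++ (List.replicate i v).flatten) : ℝ)) hQ.ne' hrec
  have hyval : ∀ i, (y i : ℝ) = (wordValue q u + V / (Q - 1)) * q ^ w.length * Q ^ i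
      + (wordValue q w - V / (Q - 1) * q ^ w.length) := by
    intro i
    rw [← wordValue_pRep hq (y i), hyw, wordValue_append, Nat.cast_add, Nat.cast_mul, hz]
    push_cast
    ring
  refine ⟨v.length, List.length_pos_iff.2 hv, _, _, lt_of_le_of_ne ?_ fun h => ?_,
    fun i => ⟨y i, hyX i, hyval i⟩⟩
  · exact mul_nonneg (add_nonneg (Nat.cast_nonneg _)
      (div_nonneg (Nat.cast_nonneg _) (sub_pos.2 hQ).le)) (by positivity)
  · -- `c = 0` would make all `y i` equal, but the pumped words have different lengths
    have h01 : y 0 = y 1 := by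
      have : (y 0 : ℝ) = y 1 := by rw [hyval, hyval, ← h]; ring
      exact_mod_cast this
    have hlen := congrArg List.length ((hyw 0).symm.trans (h01 ▸ hyw 1))
    simp only [List.replicate_zero, List.flatten_nil, List.append_nil, List.length_append,
      List.replicate_one, List.flatten_cons, List.append_assoc, Nat.add_left_cancel_iff,
      Nat.right_eq_add, List.length_eq_zero_iff] at hlen
    exact hv hlen

theorem stmt_12 (p q : ℕ) (hp : 2 ≤ p) (hq : 2 ≤ q)
    (hindep : ∀ k ℓ : ℕ, p ^ k = q ^ ℓ → k = 0 ∧ ℓ = 0)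
    (X : Set ℕ) (hX : X.Infinite)
    (hprec : ∃ (σ : Type) (_ : Fintype σ) (A : DFA (Fin p) σ),
      A.accepts = {w : List (Fin p) | ∃ n ∈ X, w = pRep p (by omega) n})
    (hqrec : ∃ (σ : Type) (_ : Fintype σ) (A : DFA (Fin q) σ),
      A.accepts = {w : List (Fin q) | ∃ n ∈ X, w = pRep q (by omega) n}) :
    ∃ C : ℕ, 0 < C ∧ ∀ n : ℕ, ∃ x ∈ X, n ≤ x ∧ x < n + C := by
  change Syndetic X
  by_contra hsyn
  obtain ⟨σ, _, A, hA⟩ := hprec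
  obtain ⟨τ, _, B, hB⟩ := hqrec
  obtain ⟨a, k, b, hb, hempty⟩ := exists_Ico_pow_disjoint_of_not_syndetic hp A hA hsyn
  obtain ⟨m, hm, c, d, hc, hy⟩ := exists_eq_mul_pow_add_of_infinite hq B hB hX
  have hPQ : ∀ s t : ℕ, (p ^ b) ^ s = (q ^ m) ^ t → s = 0 ∧ t = 0 := by
    intro s t h
    rw [← pow_mul, ← pow_mul] at h
    obtain ⟨h1, h2⟩ := hindep _ _ h
    exact ⟨(mul_eq_zero.1 h1).resolve_left hb.ne', (mul_eq_zero.1 h2).resolve_left hm.ne'⟩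
  obtain ⟨i, n, hin⟩ := exists_mul_pow_add_mem_Ico (one_lt_pow₀ hp hb.ne')
    (one_lt_pow₀ hq hm.ne') hPQ hc d (w := p ^ k) (by positivity) a.cast_nonneg
  obtain ⟨y, hyX, hyc⟩ := hy i
  refine hempty n y hyX ?_
  rw [← hyc, mem_Ico] at hin
  rw [mem_Ico, pow_add, pow_mul']
  exact_mod_cast hin
end
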